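/- Dispersion relation for the exponential kernel: let E > 0, ρ > 0, l₀ > 0, and let T be the normalized exponential convolution operator (Tψ)(x) = (1/(2 l₀)) ∫_ℝ exp(−|x−s|/l₀) ψ(s) ds. For k, ω ∈ ℝ, the plane wave u(x,t) = exp(i(k x − ω t)) satisfies the nonlocal elastodynamic equation E · (d/dx)[ T( T( ∂_x u(·,t) ) ) ](x) = ρ · ∂²_t u(x,t) for all x, t ∈ ℝ if and only if ω² = (E/ρ) · k² / (1 + k² l₀²)². -/

import Mathlib

open MeasureTheory

/-- The normalized exponential convolution operator
`(Tψ)(x) = (1/(2 l₀)) ∫ exp(−|x−s|/l₀) ψ(s) ds`. -/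
noncomputable def expConvOp (l₀ : ℝ) (ψ : ℝ → ℂ) (x : ℝ) : ℂ :=
  (1 / (2 * l₀) : ℝ) * ∫ s : ℝ, (Real.exp (-|x - s| / l₀) : ℂ) * ψ s

/-- The plane wave `u(x,t) = exp(i(kx − ωt))`. -/
noncomputable def planeWave (k ω : ℝ) (x t : ℝ) : ℂ :=
  Complex.exp (Complex.I * ((k : ℂ) * x - (ω : ℂ) * t))

/-!
The functions `s ↦ exp(i k s)` are eigenfunctions of `T`: after the substitution `u = x - s`,
`T` multiplies them by `(1/(2 l₀))` times the Fourier transform of the kernel `exp(-|u|/l₀)`,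
which is `2 l₀ / (1 + k² l₀²)`. Hence the left-hand side of the equation is
`-E k² / (1 + k² l₀²)² · u` and the right-hand side is `-ρ ω² · u`; since `u` never vanishes,
the equation holds iff these two scalars agree.
-/

open Complex Set

lemma integral_exp_neg_abs_div_mul_cexp {l₀ : ℝ} (hl₀ : 0 < l₀) (k : ℝ) :
    ∫ u : ℝ, (Real.exp (-|u| / l₀) : ℂ) * cexp (-(I * k * u))
      = ((2 * l₀ / (1 + k ^ 2 * l₀ ^ 2) : ℝ) : ℂ) := by
  set a : ℂ := 1 / l₀ - I * k
  set b : ℂ := -(1 / l₀) - I * k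
  have ha : 0 < a.re := by simp [a, hl₀]
  have hb : b.re < 0 := by simp [b, hl₀]
  have h_left : EqOn (fun u : ℝ => (Real.exp (-|u| / l₀) : ℂ) * cexp (-(I * k * u)))
      (fun u : ℝ => cexp (a * u)) (Iic 0) := fun u hu => by
    simp only [ofReal_exp, ← Complex.exp_add, abs_of_nonpos (show u ≤ 0 from hu), a]
    push_cast; ring_nf
  have h_right : EqOn (fun u : ℝ => (Real.exp (-|u| / l₀) : ℂ) * cexp (-(I * k * u)))
      (fun u : ℝ => cexp (b * u)) (Ioi 0) := fun u hu => by
    simp only [ofReal_exp, ← Complex.exp_add, abs_of_pos (show 0 < u from hu), b]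
    push_cast; ring_nf
  rw [← intervalIntegral.integral_Iic_add_Ioi
      ((integrableOn_exp_mul_complex_Iic ha 0).congr_fun h_left.symm measurableSet_Iic)
      ((integrableOn_exp_mul_complex_Ioi hb 0).congr_fun h_right.symm measurableSet_Ioi),
    setIntegral_congr_fun measurableSet_Iic h_left, setIntegral_congr_fun measurableSet_Ioi h_right,
    integral_exp_mul_complex_Iic ha, integral_exp_mul_complex_Ioi hb]
  have ha0 : a ≠ 0 := fun h => by simp [h] at ha
  have hb0 : b ≠ 0 := fun h => by simp [h] at hb
  have hl : (l₀ : ℂ) ≠ 0 := by exact_mod_cast hl₀.ne'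
  have hK : (1 + k ^ 2 * l₀ ^ 2 : ℂ) ≠ 0 := by
    exact_mod_cast (by positivity : 1 + k ^ 2 * l₀ ^ 2 ≠ 0)
  simp only [ofReal_zero, mul_zero, Complex.exp_zero]
  push_cast
  rw [div_add_div _ _ ha0 hb0, div_eq_div_iff (mul_ne_zero ha0 hb0) hK]
  simp only [a, b]
  field_simp
  ring_nf
  rw [I_sq]
  ring

lemma expConvOp_const_mul (l₀ : ℝ) (c : ℂ) (ψ : ℝ → ℂ) :
    expConvOp l₀ (fun s => c * ψ s) = fun x => c * expConvOp l₀ ψ x := by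
  ext x
  simp only [expConvOp, mul_left_comm _ c, integral_const_mul]

lemma planeWave_ne_zero (k ω x t : ℝ) : planeWave k ω x t ≠ 0 := Complex.exp_ne_zero _

lemma hasDerivAt_planeWave_space (k ω t x : ℝ) :
    HasDerivAt (fun x : ℝ => planeWave k ω x t) (I * k * planeWave k ω x t) x := by
  unfold planeWave
  convert ((((hasDerivAt_id' (x : ℂ)).const_mul (k : ℂ)).sub_const ((ω : ℂ) * t)).const_mul
    I).comp_ofReal.cexp using 1
  ring

lemma hasDerivAt_planeWave_time (k ω x t : ℝ) :
    HasDerivAt (fun t : ℝ => planeWave k ω x t) (-(I * ω) * planeWave k ω x t) t := by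
  unfold planeWave
  convert ((((hasDerivAt_id' (t : ℂ)).const_mul (ω : ℂ)).const_sub ((k : ℂ) * x)).const_mul
    I).comp_ofReal.cexp using 1
  ring

lemma deriv_deriv_planeWave_time (k ω x t : ℝ) :
    deriv (deriv fun τ : ℝ => planeWave k ω x τ) t = ((-ω ^ 2 : ℝ) : ℂ) * planeWave k ω x t := by
  have h : deriv (fun τ : ℝ => planeWave k ω x τ) = fun τ => -(I * ω) * planeWave k ω x τ :=
    funext fun τ => (hasDerivAt_planeWave_time k ω x τ).deriv
  rw [h, ((hasDerivAt_planeWave_time k ω x t).const_mul _).deriv]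
  push_cast
  ring_nf
  rw [I_sq]
  ring

lemma expConvOp_planeWave {l₀ : ℝ} (hl₀ : 0 < l₀) (k ω t x : ℝ) :
    expConvOp l₀ (fun s => planeWave k ω s t) x
      = ((1 + k ^ 2 * l₀ ^ 2 : ℝ) : ℂ)⁻¹ * planeWave k ω x t := by
  set g : ℝ → ℂ := fun u => (Real.exp (-|u| / l₀) : ℂ) * cexp (-(I * k * u))
  have hshift : ∀ s : ℝ, (Real.exp (-|x - s| / l₀) : ℂ) * planeWave k ω s t
      = planeWave k ω x t * g (x - s) := fun s => by
    have : planeWave k ω s t = planeWave k ω x t * cexp (-(I * k * ((x - s : ℝ) : ℂ))) := by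
      simp only [planeWave, ← Complex.exp_add]
      push_cast
      ring_nf
    rw [this]
    ring
  simp only [expConvOp, hshift, integral_const_mul, integral_sub_left_eq_self g volume x, g,
    integral_exp_neg_abs_div_mul_cexp hl₀]
  have hl : l₀ ≠ 0 := hl₀.ne'
  have hK : 1 + k ^ 2 * l₀ ^ 2 ≠ 0 := by positivity
  rw [← mul_assoc, mul_right_comm, ← ofReal_mul, ← ofReal_inv]
  congr 2
  field_simp

lemma deriv_expConvOp_expConvOp_deriv_planeWave {l₀ : ℝ} (hl₀ : 0 < l₀) (k ω x t : ℝ) :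
    deriv (fun y : ℝ => expConvOp l₀
        (expConvOp l₀ (fun z : ℝ => deriv (fun x' : ℝ => planeWave k ω x' t) z)) y) x
      = ((-(k ^ 2 / (1 + k ^ 2 * l₀ ^ 2) ^ 2) : ℝ) : ℂ) * planeWave k ω x t := by
  have hT : ∀ c : ℂ, expConvOp l₀ (fun s => c * planeWave k ω s t)
      = fun y => (c * ((1 + k ^ 2 * l₀ ^ 2 : ℝ) : ℂ)⁻¹) * planeWave k ω y t := fun c => by
    simp only [expConvOp_const_mul, expConvOp_planeWave hl₀, mul_assoc]
  simp only [fun z => (hasDerivAt_planeWave_space k ω t z).deriv, hT]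
  rw [((hasDerivAt_planeWave_space k ω t x).const_mul _).deriv]
  simp only [ofReal_neg, ofReal_div, ofReal_pow]
  ring_nf
  rw [I_sq]
  ring

theorem stmt_10_general (E ρ l₀ : ℝ) (hρ : 0 < ρ) (hl₀ : 0 < l₀) (k ω : ℝ) :
    (∀ x t : ℝ,
      (E : ℂ) * deriv
          (fun y : ℝ => expConvOp l₀
            (expConvOp l₀ (fun z : ℝ => deriv (fun x' : ℝ => planeWave k ω x' t) z)) y) x =
        (ρ : ℂ) * deriv (deriv (fun τ : ℝ => planeWave k ω x τ)) t) ↔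
    ω ^ 2 = (E / ρ) * k ^ 2 / (1 + k ^ 2 * l₀ ^ 2) ^ 2 := by
  simp only [deriv_expConvOp_expConvOp_deriv_planeWave hl₀, deriv_deriv_planeWave_time,
    ← mul_assoc, ← ofReal_mul, mul_left_inj' (planeWave_ne_zero _ _ _ _), ofReal_inj,
    forall_const]
  have hK : 1 + k ^ 2 * l₀ ^ 2 ≠ 0 := by positivity
  field_simp
  constructor <;> intro h <;> linarith

/-- dispersion relation for the exponential kernel: the plane wave
`exp(i(kx − ωt))` solves the nonlocal elastodynamic equation
`E (T(T(∂ₓu)))′ = ρ ∂²ₜu` iff `ω² = (E/ρ) k² / (1 + k² l₀²)²`. -/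
theorem stmt_10 (E ρ l₀ : ℝ) (hE : 0 < E) (hρ : 0 < ρ) (hl₀ : 0 < l₀) (k ω : ℝ) :
    (∀ x t : ℝ,
      (E : ℂ) * deriv
          (fun y : ℝ => expConvOp l₀
            (expConvOp l₀ (fun z : ℝ => deriv (fun x' : ℝ => planeWave k ω x' t) z)) y) x =
        (ρ : ℂ) * deriv (deriv (fun τ : ℝ => planeWave k ω x τ)) t) ↔
    ω ^ 2 = (E / ρ) * k ^ 2 / (1 + k ^ 2 * l₀ ^ 2) ^ 2 :=
  stmt_10_general E ρ l₀ hρ hl₀ k ω
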